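/- arXiv:0811.1234 — 6 statements merged into one kernel-verified Lean document; each statement's English description precedes it below -/
import Mathlib

section
/- Let ψ : ℕ → ℝ be a nonnegative function and let m ≠ n be positive integers. If λ(E_m ∩ E_n) > 0, then gcd(m,n) ≤ ψ(m)·n + ψ(n)·m. -/
/-!
A point of `E_m ∩ E_n` has a real lift `x` with `|x m - a| < ψ(m)` and `|x n - b| < ψ(n)` for
integers `a`, `b` coprime to `m`, `n`. Then `a n - b m = (x n - b) m - (x m - a) n` is bounded by
`ψ(m) n + ψ(n) m`, and it is a nonzero multiple of `gcd(m, n)`: if `a n = b m`, coprimality gives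
`m ∣ n` and `n ∣ m`, i.e. `m = n`.
-/

open MeasureTheory Filter

/-- `E_n ⊆ ℝ/ℤ`: the union over `1 ≤ a ≤ n` with `gcd(a,n)=1` of the open intervals
`((a−ψ(n))/n, (a+ψ(n))/n)` taken modulo 1. -/
def ECirc (ψ : ℕ → ℝ) (n : ℕ) : Set UnitAddCircle :=
  ⋃ a ∈ Finset.filter (fun a => Nat.Coprime a n) (Finset.Icc 1 n),
    (fun y : ℝ => (y : UnitAddCircle)) '' Set.Ioo (((a : ℝ) - ψ n) / n) (((a : ℝ) + ψ n) / n)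

lemma exists_isCoprime_abs_mul_sub_lt_of_mem_ECirc {ψ : ℕ → ℝ} {n : ℕ} {x : ℝ}
    (hx : (x : UnitAddCircle) ∈ ECirc ψ n) :
    ∃ a : ℤ, IsCoprime a n ∧ |x * n - a| < ψ n := by
  simp only [ECirc, Set.mem_iUnion, Finset.mem_filter, Finset.mem_Icc, Set.mem_image,
    Set.mem_Ioo] at hx
  obtain ⟨a, ⟨⟨ha₁, han⟩, hcop⟩, y, ⟨hy₁, hy₂⟩, hyx⟩ := hx
  obtain ⟨k, hk⟩ := QuotientAddGroup.eq_iff_sub_mem.mp hyx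
  have hnR : (0 : ℝ) < n := by exact_mod_cast ha₁.trans han
  refine ⟨a + (-k) * n, (Nat.isCoprime_iff_coprime.mpr hcop).add_mul_right_left (-k), ?_⟩
  have hxy : x = y - k := by simp only [zsmul_eq_mul, mul_one] at hk; linarith
  have hshift : x * n - ((a + (-k) * n : ℤ) : ℝ) = y * n - a := by push_cast [hxy]; ring
  rw [div_lt_iff₀ hnR] at hy₁
  rw [lt_div_iff₀ hnR] at hy₂
  rw [hshift, abs_lt]
  constructor <;> linarith

lemma Int.natCast_gcd_le_abs_mul_sub_mul {a b : ℤ} {m n : ℕ} (ha : IsCoprime a m)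
    (hb : IsCoprime b n) (hmn : m ≠ n) :
    (Nat.gcd m n : ℤ) ≤ |a * n - b * m| := by
  have hne : a * n - b * m ≠ 0 := by
    intro h
    have hmn' : (m : ℤ) ∣ n := ha.symm.dvd_of_dvd_mul_left ⟨b, by linear_combination h⟩
    have hnm : (n : ℤ) ∣ m := hb.symm.dvd_of_dvd_mul_left ⟨a, by linear_combination -h⟩
    exact hmn (by exact_mod_cast Int.dvd_antisymm (by positivity) (by positivity) hmn' hnm)
  have hdvd : (Nat.gcd m n : ℤ) ∣ a * n - b * m :=
    dvd_sub ((Int.natCast_dvd_natCast.mpr (Nat.gcd_dvd_right m n)).mul_left a)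
      ((Int.natCast_dvd_natCast.mpr (Nat.gcd_dvd_left m n)).mul_left b)
  exact Int.le_of_dvd (abs_pos.mpr hne) ((dvd_abs _ _).mpr hdvd)

lemma abs_mul_sub_mul_le {a b m n : ℝ} (x : ℝ) (hm : 0 ≤ m) (hn : 0 ≤ n) :
    |a * n - b * m| ≤ |x * m - a| * n + |x * n - b| * m :=
  calc |a * n - b * m| = |(x * n - b) * m - (x * m - a) * n| := by ring_nf
    _ ≤ |(x * n - b) * m| + |(x * m - a) * n| := abs_sub _ _
    _ = |x * m - a| * n + |x * n - b| * m := by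
      rw [abs_mul, abs_mul, abs_of_nonneg hm, abs_of_nonneg hn, add_comm]

theorem gcd_le_of_overlap_general (ψ : ℕ → ℝ) (m n : ℕ) (hmn : m ≠ n)
    (hpos : 0 < volume (ECirc ψ m ∩ ECirc ψ n)) :
    (Nat.gcd m n : ℝ) ≤ ψ m * n + ψ n * m := by
  obtain ⟨z, hzm, hzn⟩ := nonempty_of_measure_ne_zero hpos.ne'
  obtain ⟨x, rfl⟩ := QuotientAddGroup.mk_surjective z
  obtain ⟨a, ha, hxa⟩ := exists_isCoprime_abs_mul_sub_lt_of_mem_ECirc hzm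
  obtain ⟨b, hb, hxb⟩ := exists_isCoprime_abs_mul_sub_lt_of_mem_ECirc hzn
  calc (Nat.gcd m n : ℝ) ≤ |(a : ℝ) * n - b * m| := by
        exact_mod_cast Int.natCast_gcd_le_abs_mul_sub_mul ha hb hmn
    _ ≤ |x * m - a| * n + |x * n - b| * m := abs_mul_sub_mul_le x m.cast_nonneg n.cast_nonneg
    _ ≤ ψ m * n + ψ n * m := by gcongr

theorem gcd_le_of_overlap (ψ : ℕ → ℝ) (hψ : ∀ n, 0 ≤ ψ n) (m n : ℕ)
    (hm : 0 < m) (hn : 0 < n) (hmn : m ≠ n)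
    (hpos : 0 < volume (ECirc ψ m ∩ ECirc ψ n)) :
    (Nat.gcd m n : ℝ) ≤ ψ m * n + ψ n * m :=
  gcd_le_of_overlap_general ψ m n hmn hpos
end

section
/- There exists a constant c > 0 such that the inequality ∏_{p prime, p | n} (1 − 1/p)^{−1} ≥ c · log(log n) holds for infinitely many positive integers n. -/
/-!
Take `n = m!`. Its prime factors are all primes `p ≤ m`, and expanding each factor
`(1 - 1/p)⁻¹` as a geometric series shows that the product over them dominates the harmonic
sum `H_m ≥ log (m + 1)`. On the other hand `log (m!) ≤ m log m ≤ m²`, so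
`log log (m!) ≤ 2 log m`; hence `c = 1/2` works for every factorial.
-/

open Finset Real
open scoped Nat

lemma one_le_inv_one_sub_inv {x : ℝ} (hx : 1 < x) : 1 ≤ (1 - x⁻¹)⁻¹ := by
  have hx' : x⁻¹ < 1 := inv_lt_one_of_one_lt₀ hx
  have hx₀ : 0 ≤ x⁻¹ := inv_nonneg.mpr (by linarith)
  exact one_le_inv₀ (by linarith) |>.mpr (by linarith)

lemma harmonic_le_prod_primesLE (N : ℕ) :
    (harmonic N : ℝ) ≤ ∏ p ∈ Nat.primesLE N, (1 - (p : ℝ)⁻¹)⁻¹ := by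
  let f : ℕ →* ℝ := invMonoidHom.comp (Nat.castRingHom ℝ : ℕ →* ℝ)
  have hf : ∀ n : ℕ, f n = (n : ℝ)⁻¹ := fun _ ↦ rfl
  have hf_lt : ∀ {p : ℕ}, p.Prime → ‖f p‖ < 1 := fun hp ↦ by
    rw [hf, norm_inv, Real.norm_natCast]
    exact inv_lt_one_of_one_lt₀ (by exact_mod_cast hp.one_lt)
  have hEuler := hasSum_subtype_iff_indicator.mp
    (EulerProduct.summable_and_hasSum_smoothNumbers_prod_primesBelow_geometric hf_lt (N + 1)).2
  calc (harmonic N : ℝ) = ∑ n ∈ Icc 1 N, (N + 1).smoothNumbers.indicator f n := by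
        rw [harmonic_eq_sum_Icc]
        push_cast
        refine sum_congr rfl fun n hn ↦ ?_
        obtain ⟨hn₁, hnN⟩ := mem_Icc.mp hn
        rw [Set.indicator_of_mem (Nat.mem_smoothNumbers_of_lt hn₁ (by omega)), hf]
    _ ≤ ∏ p ∈ Nat.primesLE N, (1 - (p : ℝ)⁻¹)⁻¹ :=
        sum_le_hasSum _ (fun n _ ↦ Set.indicator_nonneg (fun n _ ↦ by simp [hf]) n) hEuler

lemma prod_inv_one_sub_inv_le_of_subset {s t : Finset ℕ} (hst : s ⊆ t) (ht : ∀ p ∈ t, p.Prime) :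
    ∏ p ∈ s, (1 - (p : ℝ)⁻¹)⁻¹ ≤ ∏ p ∈ t, (1 - (p : ℝ)⁻¹)⁻¹ :=
  prod_le_prod_of_subset_of_one_le hst
    (fun p hp ↦ zero_le_one.trans
      (one_le_inv_one_sub_inv (by exact_mod_cast (ht p (hst hp)).one_lt)))
    (fun p hp _ ↦ one_le_inv_one_sub_inv (by exact_mod_cast (ht p hp).one_lt))

lemma Nat.primesLE_subset_primeFactors_factorial (m : ℕ) :
    Nat.primesLE m ⊆ (m !).primeFactors := by
  intro p hp
  obtain ⟨hpm, hp⟩ := Nat.mem_primesLE.mp hp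
  exact Nat.mem_primeFactors.mpr ⟨hp, Nat.dvd_factorial hp.pos hpm, Nat.factorial_ne_zero m⟩

lemma log_log_factorial_le (m : ℕ) : log (log (m ! : ℝ)) ≤ 2 * log m := by
  rcases lt_or_ge m 2 with hm | hm
  · interval_cases m <;> simp
  have hm₀ : (0 : ℝ) < m := by positivity
  have hlog_fac_pos : 0 < log (m ! : ℝ) :=
    log_pos (by exact_mod_cast (one_lt_two.trans_le (Nat.self_le_factorial m |>.trans' hm)))
  have hlog_fac_le : log (m ! : ℝ) ≤ (m : ℝ) ^ 2 :=
    calc log (m ! : ℝ) ≤ log ((m : ℝ) ^ m) :=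
          log_le_log (by positivity) (by exact_mod_cast Nat.factorial_le_pow m)
      _ = m * log m := log_pow m _
      _ ≤ m * m := by gcongr; exact log_le_self hm₀.le
      _ = (m : ℝ) ^ 2 := (sq _).symm
  calc log (log (m ! : ℝ)) ≤ log ((m : ℝ) ^ 2) := log_le_log hlog_fac_pos hlog_fac_le
    _ = 2 * log m := by rw [log_pow]; norm_num

theorem mertens_product_large_infinitely_often :
    ∃ c : ℝ, 0 < c ∧
      {n : ℕ | 0 < n ∧
        c * Real.log (Real.log n) ≤ ∏ p ∈ n.primeFactors, (1 - 1 / (p : ℝ))⁻¹}.Infinite := by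
  refine ⟨1 / 2, by norm_num, Set.infinite_of_forall_exists_gt fun a ↦
    ⟨(a + 1)!, ⟨Nat.factorial_pos _, ?_⟩, (lt_add_one a).trans_le (Nat.self_le_factorial _)⟩⟩
  set m := a + 1
  simp only [one_div]
  calc 2⁻¹ * log (log (m ! : ℝ)) ≤ log m := by linarith [log_log_factorial_le m]
    _ ≤ log (m + 1) := log_le_log (by positivity) (by linarith)
    _ ≤ harmonic m := by exact_mod_cast log_add_one_le_harmonic m
    _ ≤ ∏ p ∈ Nat.primesLE m, (1 - (p : ℝ)⁻¹)⁻¹ := harmonic_le_prod_primesLE m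
    _ ≤ ∏ p ∈ (m !).primeFactors, (1 - (p : ℝ)⁻¹)⁻¹ :=
        prod_inv_one_sub_inv_le_of_subset (Nat.primesLE_subset_primeFactors_factorial m)
          fun _ ↦ Nat.prime_of_mem_primeFactors
end

section
/- There exists a universal constant c₂ > 0 such that for every integer n ≥ 2, ∏_{p prime, p | n, p > √(log n)} (1 − 1/p)^{−1} ≤ c₂. -/
/-!
Since `(1 - 1/p)⁻¹ ≤ exp (2/p)`, it suffices to bound `∑ 1/p` over the primes `p ∣ n` with
`p > √L`, where `L = log n`. As `n` has at most `L / log 2` prime factors, this settles small `L`,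
and also the primes beyond `L²`, each contributing less than `1/L²`. On `(√L, L²]` we use
`1/p ≤ 2 log p / (p log L)` and the Mertens-type bound
`∑_{p ≤ x} log p / p ≤ log 4 (1 + log x)`, obtained from Chebyshev's `θ x ≤ x log 4` by
partial summation.
-/

open Finset Real Chebyshev

theorem sum_primesLE_succ {M : Type*} [AddCommMonoid M] (f : ℕ → M) (N : ℕ) :
    ∑ p ∈ Nat.primesLE (N + 1), f p =
      ∑ p ∈ Nat.primesLE N, f p + if (N + 1).Prime then f (N + 1) else 0 := by
  rw [Nat.primesLE_succ]
  split_ifs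
  · rw [sum_insert fun h => by have := Nat.le_of_mem_primesLE h; omega, add_comm]
  · rw [add_zero]

theorem sum_primesLE_log_div_le (N : ℕ) :
    ∑ p ∈ Nat.primesLE N, log p / p ≤ log 4 * (1 + log N) := by
  have hlog4 : 0 < log 4 := log_pos (by norm_num)
  -- Summation by parts against `θ`, run as an induction on `N`.
  have abel : ∀ N ≥ 1,
      ∑ p ∈ Nat.primesLE N, log p / p ≤ θ N / N + log 4 * (harmonic N - 1) := by
    refine Nat.le_induction (by simp) fun N hN ih => ?_
    have hN₀ : (0 : ℝ) < N := by exact_mod_cast hN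
    have hθ : θ N / N ≤ θ N / (N + 1) + log 4 * ((N : ℝ) + 1)⁻¹ := by
      rw [← div_eq_mul_inv, ← add_div, div_le_div_iff₀ hN₀ (by positivity)]
      nlinarith [theta_le_log4_mul_x (Nat.cast_nonneg N)]
    rw [sum_primesLE_succ, theta_eq_sum_primesLE_log, sum_primesLE_succ,
      ← theta_eq_sum_primesLE_log, harmonic_succ]
    push_cast
    split_ifs
    · rw [add_div]; linarith
    · simp only [add_zero]; linarith
  rcases Nat.eq_zero_or_pos N with rfl | hN
  · simpa using hlog4.le
  have hθ : θ N / N ≤ log 4 := by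
    rw [div_le_iff₀ (by exact_mod_cast hN)]
    linarith [theta_le_log4_mul_x (Nat.cast_nonneg N)]
  nlinarith [abel N hN, harmonic_le_one_add_log N]

theorem sum_primesLE_filter_gt_inv_le {y : ℝ} (hy : 1 < y) (N : ℕ) :
    ∑ p ∈ Nat.primesLE N with y < (p : ℕ), (p : ℝ)⁻¹ ≤
      log 4 * (1 + log N) / log y := by
  have hlogy : 0 < log y := log_pos hy
  calc ∑ p ∈ Nat.primesLE N with y < (p : ℕ), (p : ℝ)⁻¹
      ≤ ∑ p ∈ Nat.primesLE N with y < (p : ℕ), log p / p / log y := by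
        refine sum_le_sum fun p hp => ?_
        have hyp : log y ≤ log p := log_le_log (by linarith) (mem_filter.mp hp).2.le
        rw [show log p / p / log y = (p : ℝ)⁻¹ * (log p / log y) by ring]
        exact le_mul_of_one_le_right (by positivity) ((one_le_div hlogy).mpr hyp)
    _ ≤ ∑ p ∈ Nat.primesLE N, log p / p / log y :=
        sum_le_sum_of_subset_of_nonneg (filter_subset _ _)
          fun p _ _ => div_nonneg (div_nonneg (log_natCast_nonneg p) p.cast_nonneg) hlogy.le
    _ ≤ log 4 * (1 + log N) / log y := by
        rw [← sum_div]
        gcongr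
        exact sum_primesLE_log_div_le N

theorem inv_one_sub_le_exp_two_mul {x : ℝ} (hx₀ : 0 ≤ x) (hx : x ≤ 1 / 2) :
    (1 - x)⁻¹ ≤ exp (2 * x) :=
  calc (1 - x)⁻¹ ≤ 1 + 2 * x := by
        rw [inv_le_iff_one_le_mul₀ (by linarith)]
        nlinarith
    _ ≤ exp (2 * x) := by linarith [add_one_le_exp (2 * x)]

theorem prod_inv_one_sub_inv_le_exp {s : Finset ℕ} (hs : ∀ p ∈ s, 2 ≤ p) :
    ∏ p ∈ s, (1 - (p : ℝ)⁻¹)⁻¹ ≤ exp (2 * ∑ p ∈ s, (p : ℝ)⁻¹) := by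
  rw [mul_sum, exp_sum]
  refine prod_le_prod (fun p hp => ?_) fun p hp => ?_
  all_goals have hp : (2 : ℝ) ≤ p := by exact_mod_cast hs p hp
  · exact inv_nonneg.mpr (sub_nonneg.mpr (inv_le_one_of_one_le₀ (by linarith)))
  · exact inv_one_sub_le_exp_two_mul (by positivity) (by rw [one_div]; gcongr)

theorem card_primeFactors_mul_log_two_le (n : ℕ) : (#n.primeFactors : ℝ) * log 2 ≤ log n := by
  rcases Nat.eq_zero_or_pos n with rfl | hn
  · simp
  have h : 2 ^ #n.primeFactors ≤ n :=
    (pow_card_le_prod _ _ _ fun p hp => (Nat.prime_of_mem_primeFactors hp).two_le).trans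
      (Nat.le_of_dvd hn (Nat.prod_primeFactors_dvd n))
  rw [← log_pow]
  exact log_le_log (by positivity) (by exact_mod_cast h)

theorem sum_inv_le_log_div_of_subset_primeFactors {n : ℕ} {s : Finset ℕ}
    (hs : s ⊆ n.primeFactors) {X : ℝ} (hX : 0 < X) (hsX : ∀ p ∈ s, X ≤ p) :
    ∑ p ∈ s, (p : ℝ)⁻¹ ≤ log n / (log 2 * X) :=
  calc ∑ p ∈ s, (p : ℝ)⁻¹ ≤ ∑ _p ∈ s, X⁻¹ :=
        sum_le_sum fun p hp => inv_anti₀ hX (hsX p hp)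
    _ = #s * X⁻¹ := by rw [sum_const, nsmul_eq_mul]
    _ ≤ #n.primeFactors * X⁻¹ := by gcongr
    _ ≤ log n / log 2 * X⁻¹ := by
        gcongr
        rw [le_div_iff₀ (log_pos one_lt_two)]
        exact card_primeFactors_mul_log_two_le n
    _ = log n / (log 2 * X) := by ring

theorem sum_primesLE_sq_filter_gt_sqrt_inv_le {L : ℝ} (hL : exp 2 ≤ L) :
    ∑ p ∈ Nat.primesLE ⌊L ^ 2⌋₊ with √L < (p : ℕ), (p : ℝ)⁻¹ ≤ 5 * log 4 := by
  have hL1 : 1 < L := (one_lt_exp_iff.mpr two_pos).trans_le hL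
  have hlogL : 2 ≤ log L := (le_log_iff_exp_le (by linarith)).mpr hL
  have hN : log ⌊L ^ 2⌋₊ ≤ 2 * log L :=
    calc log ⌊L ^ 2⌋₊ ≤ log (L ^ 2) :=
          log_le_log (Nat.cast_pos.mpr (Nat.floor_pos.mpr (one_le_pow₀ hL1.le)))
            (Nat.floor_le (by positivity))
      _ = 2 * log L := by rw [log_pow]; norm_num
  calc ∑ p ∈ Nat.primesLE ⌊L ^ 2⌋₊ with √L < (p : ℕ), (p : ℝ)⁻¹
      ≤ log 4 * (1 + log ⌊L ^ 2⌋₊) / log √L :=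
        sum_primesLE_filter_gt_inv_le ((lt_sqrt zero_le_one).mpr (by rwa [one_pow])) _
    _ ≤ log 4 * (1 + 2 * log L) / (log L / 2) := by
        rw [log_sqrt (by linarith)]
        gcongr
    _ ≤ 5 * log 4 := by
        rw [div_le_iff₀ (by linarith)]
        nlinarith [log_pos (by norm_num : (1 : ℝ) < 4)]

theorem sum_primeFactors_filter_gt_sqrt_log_inv_le (n : ℕ) :
    ∑ p ∈ n.primeFactors with √(log n) < (p : ℕ), (p : ℝ)⁻¹ ≤
      5 * log 4 + exp 2 / log 2 := by
  set L := log n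
  set S := {p ∈ n.primeFactors | √L < (p : ℕ)}
  have hS : S ⊆ n.primeFactors := filter_subset _ _
  have hlog2 : 0 < log 2 := log_pos one_lt_two
  have hlog4 : 0 < log 4 := log_pos (by norm_num)
  by_cases hL : L < exp 2
  · have hS2 : ∀ p ∈ S, (2 : ℝ) ≤ p := fun p hp =>
      mod_cast (Nat.prime_of_mem_primeFactors (hS hp)).two_le
    calc ∑ p ∈ S, (p : ℝ)⁻¹ ≤ L / (log 2 * 2) :=
          sum_inv_le_log_div_of_subset_primeFactors hS two_pos hS2
      _ ≤ exp 2 / log 2 := by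
          rw [div_le_div_iff₀ (by positivity) hlog2]
          nlinarith [mul_lt_mul_of_pos_right hL hlog2, exp_pos 2]
      _ ≤ 5 * log 4 + exp 2 / log 2 := by linarith
  rw [not_lt] at hL
  have hL1 : 1 ≤ L := (one_le_exp zero_le_two).trans hL
  have hmiddle : ∑ p ∈ S with ((p : ℕ) : ℝ) ≤ L ^ 2, (p : ℝ)⁻¹ ≤ 5 * log 4 := by
    refine le_trans (sum_le_sum_of_subset_of_nonneg (fun p hp => ?_) fun p _ _ => by positivity)
      (sum_primesLE_sq_filter_gt_sqrt_inv_le hL)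
    simp only [S, mem_filter, Nat.mem_primesLE] at hp ⊢
    exact ⟨⟨Nat.le_floor hp.2, Nat.prime_of_mem_primeFactors hp.1.1⟩, hp.1.2⟩
  have hlarge : ∑ p ∈ S with ¬((p : ℕ) : ℝ) ≤ L ^ 2, (p : ℝ)⁻¹ ≤ exp 2 / log 2 :=
    calc ∑ p ∈ S with ¬((p : ℕ) : ℝ) ≤ L ^ 2, (p : ℝ)⁻¹ ≤ L / (log 2 * L ^ 2) :=
          sum_inv_le_log_div_of_subset_primeFactors ((filter_subset _ _).trans hS)
            (by positivity) fun p hp => (not_le.mp (mem_filter.mp hp).2).le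
      _ ≤ exp 2 / log 2 := by
          rw [div_le_div_iff₀ (by positivity) hlog2]
          have hLL : L ≤ L ^ 2 := by nlinarith
          nlinarith [mul_le_mul_of_nonneg_right (one_le_exp zero_le_two)
            (by positivity : 0 ≤ log 2 * L ^ 2)]
  rw [← sum_filter_add_sum_filter_not S (fun p => ((p : ℕ) : ℝ) ≤ L ^ 2)]
  linarith

theorem product_over_large_primes_bounded :
    ∃ c₂ : ℝ, 0 < c₂ ∧ ∀ n : ℕ, 2 ≤ n →
      ∏ p ∈ n.primeFactors.filter (fun p : ℕ => Real.sqrt (Real.log n) < (p : ℝ)),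
        (1 - 1 / (p : ℝ))⁻¹ ≤ c₂ := by
  refine ⟨exp (2 * (5 * log 4 + exp 2 / log 2)), exp_pos _, fun n _ => ?_⟩
  simp only [one_div]
  calc _ ≤ exp (2 * ∑ p ∈ n.primeFactors with √(log n) < (p : ℕ), (p : ℝ)⁻¹) :=
        prod_inv_one_sub_inv_le_exp fun p hp =>
          (Nat.prime_of_mem_primeFactors (mem_filter.mp hp).1).two_le
    _ ≤ exp (2 * (5 * log 4 + exp 2 / log 2)) := by
        gcongr
        exact sum_primeFactors_filter_gt_sqrt_log_inv_le n
end

section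
/- There exist a constant ε₂ > 0 and a constant C > 0 such that for every integer n ≥ 3, τ(n) ≤ C · exp((1 − ε₂)·log n / log(log n)), where τ(n) denotes the number of positive divisors of n. -/
/-!
Write `log τ(n) = ∑_{p ∣ n} log (a_p + 1)` with `a_p = v_p(n)` and split the primes at
`X = (log n)^(7/8)`. There are at most `X` small primes, each contributing at most
`log (log n / log 2 + 1)`, in total `(log n)^(7/8 + o(1)) = o(log n / log log n)`.
For a large prime, `log (a_p + 1) ≤ a_p log 2 ≤ a_p log p · log 2 / log X`, and
`∑ a_p log p = log n`, so the large primes contribute at most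
`(8 log 2 / 7) · log n / log log n`, and `8 log 2 / 7 < 4 / 5`.
-/

open Filter Finset Real Asymptotics

theorem log_card_divisors (n : ℕ) :
    log #n.divisors = ∑ p ∈ n.primeFactors, log (n.factorization p + 1) := by
  rcases eq_or_ne n 0 with rfl | hn
  · simp
  rw [Nat.card_divisors hn, Nat.cast_prod, log_prod fun p _ => by positivity]
  push_cast
  rfl

theorem sum_factorization_mul_log (n : ℕ) :
    ∑ p ∈ n.primeFactors, n.factorization p * log p = log n := by
  rw [log_nat_eq_sum_factorization, Finsupp.sum, Nat.support_factorization]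

theorem factorization_le_log_div_log_two (n p : ℕ) :
    (n.factorization p : ℝ) ≤ log n / log 2 := by
  by_cases hp : p ∈ n.primeFactors
  · rw [le_div_iff₀ (log_pos one_lt_two)]
    calc (n.factorization p : ℝ) * log 2
        ≤ n.factorization p * log p := by
          gcongr; exact_mod_cast (Nat.prime_of_mem_primeFactors hp).two_le
      _ ≤ log n := by
          rw [← sum_factorization_mul_log n]
          exact single_le_sum (f := fun q => (n.factorization q : ℝ) * log q)
            (fun q _ => by positivity) hp
  · rw [Finsupp.notMem_support_iff.1 (Nat.support_factorization n ▸ hp), Nat.cast_zero]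
    positivity

theorem log_add_one_le_mul_log_div {a p : ℕ} {X : ℝ} (hX : 1 < X) (hp : X < p) :
    log (a + 1) ≤ a * log p * (log 2 / log X) := by
  have hlogX : 0 < log X := log_pos hX
  calc log (a + 1) ≤ a * log 2 := by
        rw [← log_pow]
        gcongr
        exact_mod_cast Nat.lt_two_pow_self
    _ = a * log X * (log 2 / log X) := by field_simp
    _ ≤ a * log p * (log 2 / log X) := by gcongr

theorem log_card_divisors_le (n : ℕ) {X : ℝ} (hX : 1 < X) :
    log #n.divisors ≤ X * log (log n / log 2 + 1) + log 2 / log X * log n := by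
  rw [log_card_divisors, ← sum_filter_add_sum_filter_not _ (fun p : ℕ => (p : ℝ) ≤ X)]
  gcongr ?_ + ?_
  · have hcard : (#{p ∈ n.primeFactors | ((p : ℕ) : ℝ) ≤ X} : ℝ) ≤ X := by
      calc (#{p ∈ n.primeFactors | ((p : ℕ) : ℝ) ≤ X} : ℝ) ≤ #(Icc 1 ⌊X⌋₊) := by
            gcongr
            intro p hp
            obtain ⟨hp, hpX⟩ := mem_filter.1 hp
            exact mem_Icc.2 ⟨(Nat.prime_of_mem_primeFactors hp).one_le, Nat.le_floor hpX⟩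
        _ ≤ X := by simpa using Nat.floor_le (by linarith)
    calc ∑ p ∈ n.primeFactors with ((p : ℕ) : ℝ) ≤ X, log (n.factorization p + 1)
        ≤ ∑ p ∈ n.primeFactors with ((p : ℕ) : ℝ) ≤ X, log (log n / log 2 + 1) := by
          gcongr with p
          exact factorization_le_log_div_log_two n p
      _ ≤ X * log (log n / log 2 + 1) := by
          rw [sum_const, nsmul_eq_mul]
          gcongr
          exact log_nonneg (le_add_of_nonneg_left (by positivity))
  · calc ∑ p ∈ n.primeFactors with ¬((p : ℕ) : ℝ) ≤ X, log (n.factorization p + 1)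
        ≤ ∑ p ∈ n.primeFactors with ¬((p : ℕ) : ℝ) ≤ X,
            n.factorization p * log p * (log 2 / log X) := by
          gcongr with p hp
          exact log_add_one_le_mul_log_div hX (not_le.1 (mem_filter.1 hp).2)
      _ ≤ ∑ p ∈ n.primeFactors, n.factorization p * log p * (log 2 / log X) := by
          refine sum_le_sum_of_subset_of_nonneg (filter_subset _ _) fun p _ _ => ?_
          have := log_pos hX
          positivity
      _ = log 2 / log X * log n := by
          rw [← sum_mul, sum_factorization_mul_log, mul_comm]

theorem isLittleO_rpow_mul_log_div_add_one_mul_log {θ c : ℝ} (hθ : θ < 1) (hc : 0 ≤ c) :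
    (fun x => x ^ θ * log (x / c + 1) * log x) =o[atTop] id := by
  have hbig : (fun x => x ^ θ * log (x / c + 1) * log x) =O[atTop]
      fun x => x ^ θ * log x ^ 2 := by
    refine IsBigO.of_bound 2 ?_
    filter_upwards [eventually_ge_atTop (c⁻¹ + 1), eventually_ge_atTop 1] with x hxc hx1
    have hlogx : 0 ≤ log x := log_nonneg hx1
    have hx2 : x / c + 1 ≤ x ^ 2 := by
      rw [div_eq_mul_inv]
      nlinarith [inv_nonneg.2 hc]
    have hlog : log (x / c + 1) ≤ 2 * log x := by
      calc log (x / c + 1) ≤ log (x ^ 2) := log_le_log (by positivity) hx2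
        _ = 2 * log x := by rw [log_pow, Nat.cast_ofNat]
    have hlog' : 0 ≤ log (x / c + 1) := log_nonneg (le_add_of_nonneg_left (by positivity))
    rw [norm_of_nonneg (by positivity), norm_of_nonneg (by positivity)]
    calc x ^ θ * log (x / c + 1) * log x ≤ x ^ θ * (2 * log x) * log x := by gcongr
      _ = 2 * (x ^ θ * log x ^ 2) := by ring
  have hsmall : (fun x => x ^ θ * log x ^ 2) =o[atTop] id := by
    refine ((isBigO_refl (fun x => x ^ θ) atTop).mul_isLittleO
      (isLittleO_log_rpow_rpow_atTop 2 (sub_pos.2 hθ))).congr' ?_ ?_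
    · exact .of_eq (by simp)
    · filter_upwards [eventually_gt_atTop 0] with x hx
      rw [← rpow_add hx, add_sub_cancel, rpow_one, id]
  exact hbig.trans_isLittleO hsmall

theorem exists_rpow_mul_log_div_add_one_le {θ c δ : ℝ} (hθ₀ : 0 ≤ θ) (hθ : θ < 1)
    (hc : 0 ≤ c) (hδ : 0 < δ) :
    ∃ K, ∀ x ≥ 1, x ^ θ * log (x / c + 1) ≤ K + δ * (x / log x) := by
  obtain ⟨x₀, hx₀⟩ := eventually_atTop.1
    (((isLittleO_rpow_mul_log_div_add_one_mul_log hθ hc).bound hδ).and (eventually_gt_atTop 1))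
  have hlog_nonneg {x : ℝ} (hx : 0 ≤ x) : 0 ≤ log (x / c + 1) :=
    log_nonneg (le_add_of_nonneg_left (by positivity))
  have hx₀1 : 1 < x₀ := (hx₀ x₀ le_rfl).2
  -- Below `x₀` the left side is monotone, so its value at `x₀` bounds it.
  refine ⟨x₀ ^ θ * log (x₀ / c + 1), fun x hx => ?_⟩
  rcases le_total x x₀ with hxx₀ | hx₀x
  · have hlogx : 0 ≤ log x := log_nonneg hx
    have hmono : x ^ θ * log (x / c + 1) ≤ x₀ ^ θ * log (x₀ / c + 1) := by
      have := hlog_nonneg (x := x) (by linarith)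
      gcongr
    have : 0 ≤ δ * (x / log x) := by positivity
    linarith
  · obtain ⟨hbound, hx1⟩ := hx₀ x hx₀x
    have hK : 0 ≤ x₀ ^ θ * log (x₀ / c + 1) :=
      mul_nonneg (rpow_nonneg (by linarith) _) (hlog_nonneg (by linarith))
    have hlogx : 0 < log x := log_pos hx1
    have := hlog_nonneg (x := x) (by linarith)
    rw [norm_of_nonneg (by positivity), id, norm_of_nonneg (by linarith)] at hbound
    have : x ^ θ * log (x / c + 1) ≤ δ * (x / log x) := by
      rwa [mul_div_assoc', le_div_iff₀ hlogx]
    linarith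

theorem divisor_bound :
    ∃ ε₂ : ℝ, 0 < ε₂ ∧ ∃ C : ℝ, 0 < C ∧ ∀ n : ℕ, 3 ≤ n →
      (n.divisors.card : ℝ) ≤
        C * Real.exp ((1 - ε₂) * Real.log n / Real.log (Real.log n)) := by
  have hlog2 : 0 < log 2 := log_pos one_lt_two
  obtain ⟨K, hK⟩ := exists_rpow_mul_log_div_add_one_le (θ := 7 / 8) (δ := 1 / 10)
    (by norm_num) (by norm_num) hlog2.le (by norm_num)
  refine ⟨1 / 10, by norm_num, exp K, exp_pos K, fun n hn => ?_⟩
  have hL : 1 < log n := by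
    rw [lt_log_iff_exp_lt (by positivity)]
    calc exp 1 < 3 := exp_one_lt_d9.trans (by norm_num)
      _ ≤ n := by exact_mod_cast hn
  have hlogL : 0 < log (log n) := log_pos hL
  have hlarge : log 2 / log (log n ^ (7 / 8 : ℝ)) * log n ≤ 4 / 5 * (log n / log (log n)) := by
    rw [log_rpow (by linarith), show log 2 / (7 / 8 * log (log n)) * log n =
      8 / 7 * log 2 * (log n / log (log n)) by field_simp]
    gcongr
    linarith [log_two_lt_d9]
  have hτ : (0 : ℝ) < #n.divisors := by
    exact_mod_cast card_pos.2 (Nat.nonempty_divisors.2 (by omega))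
  rw [← log_le_log_iff hτ (by positivity), log_mul (by positivity) (by positivity), log_exp,
    log_exp]
  calc log #n.divisors
      ≤ log n ^ (7 / 8 : ℝ) * log (log n / log 2 + 1)
          + log 2 / log (log n ^ (7 / 8 : ℝ)) * log n :=
        log_card_divisors_le n (one_lt_rpow hL (by norm_num))
    _ ≤ K + 1 / 10 * (log n / log (log n)) + 4 / 5 * (log n / log (log n)) :=
        add_le_add (hK _ hL.le) hlarge
    _ = K + (1 - 1 / 10) * log n / log (log n) := by ring
end

section
/- (Gallagher's zero-one law.) For every nonnegative function ψ : ℕ → ℝ, the Lebesgue measure of W(ψ) is either 0 or 1: λ(W(ψ)∩[0,1)) ∈ {0, 1}. -/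
/-!
When `ψ n / n → 0`, the theorem is Gallagher's ergodic theorem
`AddCircle.addWellApproximable_ae_empty_or_univ`: `W(ψ)` is the lift to `[0, 1)` of the set of
points of `ℝ/ℤ` that are `ψ n / n`-well approximable by points of exact order `n`.

Otherwise `ψ n ≥ ε n` for infinitely many `n`, and then `W(ψ) = [0, 1)`: for large `n` every
interval of length `ε n` contains an integer coprime to `n`. This follows from Legendre's sieve,
which counts such integers up to an error `2 ^ ω(n)` around a main term at least
`ε n / 2 ^ ω(n)`; the main term wins since `16 ^ ω(n) ≤ 16 ^ 16 n`.
-/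

open MeasureTheory Filter Finset

/-- `W(ψ)`: the set of `x ∈ [0,1)` such that `|n·x − a| < ψ(n)` for infinitely many
pairs `(a, n)` with `n > 0` and `gcd(a, n) = 1`. -/
def WSet (ψ : ℕ → ℝ) : Set ℝ :=
  {x | x ∈ Set.Ico (0 : ℝ) 1 ∧
    {p : ℤ × ℕ | 0 < p.2 ∧ Int.gcd p.1 (p.2 : ℤ) = 1 ∧
      |(p.2 : ℝ) * x - (p.1 : ℝ)| < ψ p.2}.Infinite}

theorem Int.natCast_prod_dvd_iff {P : Finset ℕ} (hP : ∀ p ∈ P, p.Prime) (a : ℤ) :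
    ((∏ p ∈ P, p : ℕ) : ℤ) ∣ a ↔ ∀ p ∈ P, (p : ℤ) ∣ a := by
  simp only [Int.natCast_dvd]
  exact ⟨fun h p hp => (dvd_prod_of_mem _ hp).trans h,
    prod_primes_dvd _ fun p hp => (hP p hp).prime⟩

theorem indicator_forall_not_dvd_eq_sum {P : Finset ℕ} (hP : ∀ p ∈ P, p.Prime) (a : ℤ) :
    (if ∀ p ∈ P, ¬(p : ℤ) ∣ a then 1 else 0 : ℝ) =
      ∑ T ∈ P.powerset, (-1) ^ #T * if ((∏ p ∈ T, p : ℕ) : ℤ) ∣ a then 1 else 0 := by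
  have h (p : ℕ) : (if ¬(p : ℤ) ∣ a then 1 else 0 : ℝ) = 1 - if (p : ℤ) ∣ a then 1 else 0 := by
    split_ifs <;> simp
  rw [← prod_boole]
  simp_rw [h, prod_sub, prod_const_one, mul_one, prod_boole]
  refine sum_congr rfl fun T hT => ?_
  simp only [Int.natCast_prod_dvd_iff fun p hp => hP p (mem_powerset.mp hT hp)]

theorem abs_card_filter_forall_not_dvd_sub_le {P : Finset ℕ} (hP : ∀ p ∈ P, p.Prime)
    (s : Finset ℤ) (X : ℝ)
    (hs : ∀ T ⊆ P, |(#{a ∈ s | ((∏ p ∈ T, p : ℕ) : ℤ) ∣ a} : ℝ) - X / ∏ p ∈ T, (p : ℝ)| ≤ 1) :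
    |(#{a ∈ s | ∀ p ∈ P, ¬(p : ℤ) ∣ a} : ℝ) - X * ∏ p ∈ P, (1 - (p : ℝ)⁻¹)| ≤ 2 ^ #P := by
  have hcount : (#{a ∈ s | ∀ p ∈ P, ¬(p : ℤ) ∣ a} : ℝ) =
      ∑ T ∈ P.powerset, (-1) ^ #T * (#{a ∈ s | ((∏ p ∈ T, p : ℕ) : ℤ) ∣ a} : ℝ) := by
    simp_rw [natCast_card_filter, indicator_forall_not_dvd_eq_sum hP, mul_sum]
    exact sum_comm
  have hmain : X * ∏ p ∈ P, (1 - (p : ℝ)⁻¹) =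
      ∑ T ∈ P.powerset, (-1) ^ #T * (X / ∏ p ∈ T, (p : ℝ)) := by
    simp_rw [prod_sub, prod_const_one, mul_one, mul_sum, prod_inv_distrib]
    exact sum_congr rfl fun T _ => by ring
  rw [hcount, hmain, ← sum_sub_distrib]
  calc |∑ T ∈ P.powerset, ((-1) ^ #T * (#{a ∈ s | ((∏ p ∈ T, p : ℕ) : ℤ) ∣ a} : ℝ)
          - (-1) ^ #T * (X / ∏ p ∈ T, (p : ℝ)))|
      ≤ ∑ T ∈ P.powerset, |(-1) ^ #T * (#{a ∈ s | ((∏ p ∈ T, p : ℕ) : ℤ) ∣ a} : ℝ)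
          - (-1) ^ #T * (X / ∏ p ∈ T, (p : ℝ))| := abs_sum_le_sum_abs _ _
    _ ≤ ∑ T ∈ P.powerset, 1 := sum_le_sum fun T hT => by
        rw [← mul_sub, abs_mul, abs_pow, abs_neg, abs_one, one_pow, one_mul]
        exact hs T (mem_powerset.mp hT)
    _ = 2 ^ #P := by simp

theorem abs_card_filter_dvd_Ico_sub_le (x : ℤ) (m d : ℕ) (hd : 0 < d) :
    |(#{a ∈ Ico x (x + m) | (d : ℤ) ∣ a} : ℝ) - m / d| ≤ 1 := by
  rw [← Int.cast_natCast, Int.Ico_filter_dvd_card _ _ (by exact_mod_cast hd)]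
  set u : ℚ := (x + m : ℤ) / (d : ℤ)
  set v : ℚ := x / (d : ℤ)
  have huv : u - v = (m : ℚ) / d := by
    simp only [u, v]; push_cast; ring
  have hle : ⌈v⌉ ≤ ⌈u⌉ := Int.ceil_mono (by linarith [show (0 : ℚ) ≤ m / d by positivity])
  rw [max_eq_left (sub_nonneg.mpr hle)]
  have key : |((⌈u⌉ - ⌈v⌉ : ℤ) : ℚ) - m / d| ≤ 1 := by
    rw [abs_le]; push_cast
    constructor <;>
      linarith [Int.le_ceil u, Int.ceil_lt_add_one u, Int.le_ceil v, Int.ceil_lt_add_one v]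
  simpa using (Rat.cast_le (K := ℝ)).mpr key

theorem pow_card_le_pow_mul_prod (P : Finset ℕ) (hP : ∀ p ∈ P, 0 < p) (b : ℕ) :
    b ^ #P ≤ b ^ b * ∏ p ∈ P, p := by
  have hsmall : #{p ∈ P | p < b} ≤ b := by
    simpa using card_le_card (s := {p ∈ P | p < b}) (t := range b) fun p hp => by
      simpa using (mem_filter.mp hp).2
  calc b ^ #P = (∏ p ∈ P with p < b, b) * ∏ p ∈ P with ¬p < b, b := by
        rw [prod_filter_mul_prod_filter_not, prod_const]
    _ ≤ b ^ b * ∏ p ∈ P with ¬p < b, p := by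
        gcongr with p hp
        · rw [prod_const]
          rcases b.eq_zero_or_pos with rfl | hb
          · simp_all
          · exact Nat.pow_le_pow_right hb hsmall
        · exact not_lt.mp (mem_filter.mp hp).2
    _ ≤ b ^ b * ∏ p ∈ P, p := by
        gcongr
        · exact fun p hp _ => hP p hp
        · exact filter_subset _ _

theorem eventually_two_mul_four_pow_card_primeFactors_le {ε : ℝ} (hε : 0 < ε) :
    ∀ᶠ n : ℕ in atTop, 2 * 4 ^ #n.primeFactors ≤ ε * n := by
  filter_upwards [eventually_ge_atTop ⌈4 * 16 ^ 16 / ε ^ 2⌉₊, eventually_gt_atTop 0]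
    with n hn hn0
  have hω : ((4 : ℝ) ^ #n.primeFactors) ^ 2 ≤ 16 ^ 16 * n := by
    have := (pow_card_le_pow_mul_prod _ (fun _ => Nat.pos_of_mem_primeFactors) 16).trans
      (Nat.mul_le_mul_left _ (Nat.le_of_dvd hn0 (Nat.prod_primeFactors_dvd n)))
    rw [← pow_mul, mul_comm, pow_mul]
    exact_mod_cast this
  have hn' : 4 * 16 ^ 16 / ε ^ 2 ≤ (n : ℝ) := (Nat.ceil_le).mp hn
  rw [div_le_iff₀ (by positivity)] at hn'
  refine (pow_le_pow_iff_left₀ (by positivity) (by positivity) two_ne_zero).mp ?_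
  nlinarith [Nat.cast_nonneg (α := ℝ) n]

theorem Int.gcd_eq_one_of_forall_primeFactors_not_dvd {n : ℕ} (hn : n ≠ 0) {a : ℤ}
    (h : ∀ p ∈ n.primeFactors, ¬(p : ℤ) ∣ a) : Int.gcd a n = 1 := by
  refine Nat.coprime_of_dvd fun p hp hpa hpn => h p ?_ (Int.natCast_dvd.mpr hpa)
  exact Nat.mem_primeFactors.mpr ⟨hp, hpn, hn⟩

theorem eventually_exists_coprime_mem_Ico {ε : ℝ} (hε : 0 < ε) :
    ∀ᶠ n : ℕ in atTop, ∀ t : ℝ, ∃ a : ℤ, Int.gcd a n = 1 ∧ t ≤ a ∧ a < t + ε * n := by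
  filter_upwards [eventually_two_mul_four_pow_card_primeFactors_le hε, eventually_ne_atTop 0]
    with n hn hn0 t
  set P := n.primeFactors
  set m := ⌊ε * n⌋₊
  have hP : ∀ p ∈ P, p.Prime := fun p hp => Nat.prime_of_mem_primeFactors hp
  have hsieve := abs_card_filter_forall_not_dvd_sub_le hP (Ico ⌈t⌉ (⌈t⌉ + m)) m
    fun T hT => by
      simpa using abs_card_filter_dvd_Ico_sub_le ⌈t⌉ m (∏ p ∈ T, p)
        (prod_pos fun p hp => (hP p (hT hp)).pos)
  have hprod : (2 ^ #P)⁻¹ ≤ ∏ p ∈ P, (1 - (p : ℝ)⁻¹) := by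
    rw [← inv_pow, ← prod_const]
    refine prod_le_prod (fun _ _ => by norm_num) fun p hp => ?_
    have : (2 : ℝ) ≤ p := by exact_mod_cast (hP p hp).two_le
    have : (p : ℝ)⁻¹ ≤ 2⁻¹ := inv_anti₀ two_pos this
    linarith
  have hm : (4 : ℝ) ^ #P < m := by
    have := Nat.lt_floor_add_one (ε * n)
    have : (1 : ℝ) ≤ 4 ^ #P := one_le_pow₀ (by norm_num)
    linarith
  obtain ⟨a, ha⟩ : ({a ∈ Ico ⌈t⌉ (⌈t⌉ + m) | ∀ p ∈ P, ¬(p : ℤ) ∣ a}).Nonempty := by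
    rw [← card_pos, ← Nat.cast_pos (α := ℝ)]
    calc (0 : ℝ) < m * (2 ^ #P)⁻¹ - 2 ^ #P := by
          rw [sub_pos, ← div_eq_mul_inv, lt_div_iff₀ (by positivity), ← mul_pow]
          norm_num [hm]
      _ ≤ m * ∏ p ∈ P, (1 - (p : ℝ)⁻¹) - 2 ^ #P := by gcongr
      _ ≤ _ := by linarith [(abs_le.mp hsieve).1]
  obtain ⟨haI, hacop⟩ := mem_filter.mp ha
  obtain ⟨hta, ham⟩ := mem_Ico.mp haI
  refine ⟨a, Int.gcd_eq_one_of_forall_primeFactors_not_dvd hn0 hacop, Int.ceil_le.mp hta, ?_⟩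
  have h1 : (a : ℝ) + 1 ≤ ⌈t⌉ + m := by exact_mod_cast ham
  have h2 : (⌈t⌉ : ℝ) < t + 1 := Int.ceil_lt_add_one t
  have h3 : (m : ℝ) ≤ ε * n := Nat.floor_le (by positivity)
  linarith

namespace UnitAddCircle

theorem exists_coprime_norm_sub_lt_iff (x r : ℝ) {n : ℕ} (hn : 0 < n) :
    (∃ m < n, Nat.gcd m n = 1 ∧ ‖(x : UnitAddCircle) - ↑((m : ℝ) / n)‖ < r) ↔
      ∃ a : ℤ, Int.gcd a n = 1 ∧ |x - a / n| < r := by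
  constructor
  · rintro ⟨m, -, hm, hlt⟩
    refine ⟨m + n * round (x - m / n), ?_, ?_⟩
    · rw [Int.gcd_add_mul_left_left, Int.gcd_natCast_natCast, hm]
    · rw [← AddCircle.coe_sub, UnitAddCircle.norm_eq] at hlt
      convert hlt using 2
      generalize round (x - m / n) = k
      push_cast
      field_simp
      ring
  · rintro ⟨a, ha, hlt⟩
    have hmod : 0 ≤ a % n := Int.emod_nonneg a (by positivity)
    have hlt_n : a % n < n := Int.emod_lt_of_pos a (by positivity)
    refine ⟨(a % n).toNat, by omega, ?_, ?_⟩
    · rw [← Int.gcd_natCast_natCast, Int.toNat_of_nonneg hmod, Int.gcd_emod, ha]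
    · have hx : x - ((a % n).toNat : ℝ) / n = x - a / n + (a / n : ℤ) := by
        have ha' : (a : ℝ) = (a % n).toNat + n * (a / n : ℤ) := by
          rw [← Int.cast_natCast, Int.toNat_of_nonneg hmod]
          exact_mod_cast (Int.emod_add_mul_ediv a n).symm
        rw [ha']
        field_simp
        ring
      rw [← AddCircle.coe_sub, hx, UnitAddCircle.norm_eq, round_add_intCast, Int.cast_add,
        add_sub_add_right_eq_sub]
      exact (round_le _ 0).trans_lt (by simpa using hlt)

theorem coe_mem_addWellApproximable_iff (δ : ℕ → ℝ) (x : ℝ) :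
    (x : UnitAddCircle) ∈ addWellApproximable UnitAddCircle δ ↔
      {n : ℕ | 0 < n ∧ ∃ a : ℤ, Int.gcd a n = 1 ∧ |x - a / n| < δ n}.Infinite := by
  rw [UnitAddCircle.mem_addWellApproximable_iff]
  congr! 1
  ext n
  constructor
  · rintro ⟨m, hmn, hm⟩
    have hn : 0 < n := by omega
    exact ⟨hn, (exists_coprime_norm_sub_lt_iff x _ hn).mp ⟨m, hmn, hm⟩⟩
  · rintro ⟨hn, h⟩
    exact (exists_coprime_norm_sub_lt_iff x _ hn).mpr h

theorem addWellApproximable_eq_univ_of_not_tendsto {δ : ℕ → ℝ} (hδ : ∀ n, 0 ≤ δ n)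
    (h : ¬Tendsto δ atTop (nhds 0)) : addWellApproximable UnitAddCircle δ = Set.univ := by
  obtain ⟨ε, hε, hfreq⟩ : ∃ ε > 0, ∃ᶠ n in atTop, ε ≤ δ n := by
    rw [Metric.tendsto_atTop] at h
    push Not at h
    obtain ⟨ε, hε, hN⟩ := h
    refine ⟨ε, hε, frequently_atTop.mpr fun N => ?_⟩
    obtain ⟨n, hn, hεn⟩ := hN N
    exact ⟨n, hn, by simpa [Real.dist_eq, abs_of_nonneg (hδ n)] using hεn⟩
  refine Set.eq_univ_of_forall fun y => ?_
  obtain ⟨x, rfl⟩ := QuotientAddGroup.mk_surjective y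
  rw [coe_mem_addWellApproximable_iff, ← Nat.frequently_atTop_iff_infinite]
  refine (hfreq.and_eventually ((eventually_exists_coprime_mem_Ico hε).and
    (eventually_gt_atTop 0))).mono ?_
  rintro n ⟨hεn, hcop, hn⟩
  obtain ⟨a, ha, hxa, hax⟩ := hcop (n * x)
  refine ⟨hn, a, ha, ?_⟩
  have hn' : (0 : ℝ) < n := by exact_mod_cast hn
  rw [abs_sub_comm, abs_of_nonneg (sub_nonneg.mpr ((le_div_iff₀ hn').mpr (by linarith))),
    sub_lt_iff_lt_add', div_lt_iff₀ hn']
  nlinarith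

theorem addWellApproximable_ae_eq_empty_or_univ {δ : ℕ → ℝ} (hδ : ∀ n, 0 ≤ δ n) :
    addWellApproximable UnitAddCircle δ =ᵐ[volume] (∅ : Set UnitAddCircle) ∨
      addWellApproximable UnitAddCircle δ =ᵐ[volume] Set.univ := by
  by_cases h : Tendsto δ atTop (nhds 0)
  · rw [eventuallyEq_empty, eventuallyEq_univ]
    exact AddCircle.addWellApproximable_ae_empty_or_univ δ h
  · exact Or.inr (addWellApproximable_eq_univ_of_not_tendsto hδ h).eventuallyEq

theorem volume_coe_preimage_inter_Ico_congr {E F : Set UnitAddCircle} (h : E =ᵐ[volume] F) :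
    volume (((↑) : ℝ → UnitAddCircle) ⁻¹' E ∩ Set.Ico 0 1) =
      volume (((↑) : ℝ → UnitAddCircle) ⁻¹' F ∩ Set.Ico 0 1) := by
  simp only [← Measure.restrict_apply' measurableSet_Ico, restrict_Ico_eq_restrict_Ioc]
  have hmk := UnitAddCircle.measurePreserving_mk 0
  rw [zero_add] at hmk
  exact measure_congr (hmk.quasiMeasurePreserving.preimage_ae_eq h)

end UnitAddCircle

theorem infinite_setOf_coprime_pairs_iff (ψ : ℕ → ℝ) (x : ℝ) :
    {p : ℤ × ℕ | 0 < p.2 ∧ Int.gcd p.1 (p.2 : ℤ) = 1 ∧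
      |(p.2 : ℝ) * x - (p.1 : ℝ)| < ψ p.2}.Infinite ↔
      {n : ℕ | 0 < n ∧ ∃ a : ℤ, Int.gcd a n = 1 ∧ |n * x - a| < ψ n}.Infinite := by
  set S := {p : ℤ × ℕ | 0 < p.2 ∧ Int.gcd p.1 (p.2 : ℤ) = 1 ∧
      |(p.2 : ℝ) * x - (p.1 : ℝ)| < ψ p.2}
  have himage : Prod.snd '' S = {n : ℕ | 0 < n ∧ ∃ a : ℤ, Int.gcd a n = 1 ∧ |n * x - a| < ψ n} := by
    ext n
    simp [S]
  rw [← himage]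
  refine ⟨fun hS hfin => hS (hfin.of_finite_fibers Prod.snd fun n _ => ?_), .of_image _⟩
  refine ((Set.finite_Icc ⌈n * x - ψ n⌉ ⌊n * x + ψ n⌋).prod (Set.finite_singleton n)).subset ?_
  rintro ⟨a, k⟩ ⟨⟨-, -, hlt⟩, rfl : k = n⟩
  rw [abs_sub_lt_iff] at hlt
  exact ⟨⟨Int.ceil_le.mpr (by linarith), Int.le_floor.mpr (by linarith)⟩, rfl⟩

theorem mem_WSet_iff (ψ : ℕ → ℝ) (x : ℝ) :
    x ∈ WSet ψ ↔ x ∈ Set.Ico (0 : ℝ) 1 ∧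
      (x : UnitAddCircle) ∈ addWellApproximable UnitAddCircle (fun n => ψ n / n) := by
  rw [WSet, Set.mem_ofPred_eq, infinite_setOf_coprime_pairs_iff,
    UnitAddCircle.coe_mem_addWellApproximable_iff]
  congr! 3
  ext n
  refine and_congr_right fun hn => exists_congr fun a => and_congr_right fun _ => ?_
  have hn' : (0 : ℝ) < n := by exact_mod_cast hn
  rw [show x - a / n = (n * x - a) / n by field_simp, abs_div, abs_of_pos hn',
    div_lt_div_iff_of_pos_right hn']

/-- Gallagher's zero-one law. -/
theorem gallagher_zero_one_law (ψ : ℕ → ℝ) (hψ : ∀ n, 0 ≤ ψ n) :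
    volume (WSet ψ ∩ Set.Ico (0 : ℝ) 1) = 0 ∨
      volume (WSet ψ ∩ Set.Ico (0 : ℝ) 1) = 1 := by
  have hW : WSet ψ ∩ Set.Ico 0 1 = ((↑) : ℝ → UnitAddCircle) ⁻¹'
      addWellApproximable UnitAddCircle (fun n => ψ n / n) ∩ Set.Ico 0 1 := by
    ext x
    simp only [Set.mem_inter_iff, mem_WSet_iff, Set.mem_preimage]
    tauto
  rw [hW]
  rcases UnitAddCircle.addWellApproximable_ae_eq_empty_or_univ
    (fun n => div_nonneg (hψ n) n.cast_nonneg) with h | h <;>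
    rw [UnitAddCircle.volume_coe_preimage_inter_Ico_congr h]
  · simp
  · simp [Real.volume_Ico]
end

section
/- Let f : [0,∞) → ℝ be defined by f(0)=0, f(x) = x·exp(log x / (2·log(−log x))) for 0 < x < 1, and f(x)=1 for x ≥ 1. Then for every ε > 0: (i) f(x)/x^{1+ε} → ∞ as x → 0⁺, and (ii) f(x)·(−log x)^{ε}/x → 0 as x → 0⁺. In other words, as x tends to zero from above, f(x) tends to zero faster than x·(−log x)^{−ε} but more slowly than x^{1+ε}, for every ε > 0. -/
/-!
Put `t = -log x`, so that `t → ∞` as `x → 0⁺` and `f(x) = x · exp(-t / (2 log t))`.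
Then `f(x) / x^{1+ε} = exp(ε t - t / (2 log t))` and
`f(x) (-log x)^ε / x = exp(ε log t - t / (2 log t))`.
The correction `t / (2 log t)` is `o(t)`, which gives (i), and it dominates `ε log t`
because `t / (log t)^2 → ∞`, which gives (ii).
-/

open Filter Topology

/-- The function `f` from the paper: `f(0)=0`,
`f(x) = x·exp(log x / (2·log(−log x)))` for `0 < x < 1`, and `f(x)=1` for `x ≥ 1`. -/
noncomputable def dsF (x : ℝ) : ℝ :=
  if x ≤ 0 then 0
  else if x < 1 then x * Real.exp (Real.log x / (2 * Real.log (-Real.log x)))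
  else 1

open Real

theorem tendsto_div_log_sq_atTop : Tendsto (fun t => t / log t ^ 2) atTop atTop := by
  refine ((tendsto_exp_div_pow_atTop 2).comp tendsto_log_atTop).congr' ?_
  filter_upwards [eventually_gt_atTop 0] with t ht
  simp [exp_log ht]

theorem tendsto_mul_sub_div_two_log_atTop {ε : ℝ} (hε : 0 < ε) :
    Tendsto (fun t => ε * t - t / (2 * log t)) atTop atTop := by
  have hinv : Tendsto (fun t => ε - (2 * log t)⁻¹) atTop (𝓝 ε) := by
    simpa using tendsto_const_nhds.sub
      (tendsto_log_atTop.const_mul_atTop two_pos).inv_tendsto_atTop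
  refine (tendsto_id.atTop_mul_pos hε hinv).congr fun t => ?_
  simp only [id]
  ring

theorem tendsto_mul_log_sub_div_two_log_atBot (ε : ℝ) :
    Tendsto (fun t => ε * log t - t / (2 * log t)) atTop atBot := by
  have hfactor : Tendsto (fun t => ε - t / log t ^ 2 / 2) atTop atBot :=
    tendsto_atBot_add_const_left _ ε
      (tendsto_neg_atTop_atBot.comp (tendsto_div_log_sq_atTop.atTop_div_const two_pos))
  refine (tendsto_log_atTop.atTop_mul_atBot₀ hfactor).congr' ?_
  filter_upwards [eventually_gt_atTop 1] with t ht
  have hlog : log t ≠ 0 := (log_pos ht).ne'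
  field_simp

theorem dsF_div_rpow_eq {x : ℝ} (h0 : 0 < x) (h1 : x < 1) (ε : ℝ) :
    dsF x / x ^ (1 + ε) = exp (ε * -log x - -log x / (2 * log (-log x))) := by
  rw [dsF, if_neg h0.not_ge, if_pos h1, rpow_add h0, rpow_one, rpow_def_of_pos h0,
    mul_div_mul_left _ _ h0.ne', ← exp_sub]
  ring_nf

theorem dsF_mul_rpow_neg_log_div_eq {x : ℝ} (h0 : 0 < x) (h1 : x < 1) (ε : ℝ) :
    dsF x * (-log x) ^ ε / x = exp (ε * log (-log x) - -log x / (2 * log (-log x))) := by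
  have ht : 0 < -log x := neg_pos.2 (log_neg h0 h1)
  rw [dsF, if_neg h0.not_ge, if_pos h1, rpow_def_of_pos ht, mul_assoc,
    mul_div_cancel_left₀ _ h0.ne', ← exp_add]
  ring_nf

/-- As `x → 0⁺`, `f(x)` tends to zero more slowly than `x^{1+ε}` and faster than
`x·(−log x)^{−ε}`, for every `ε > 0`. -/
theorem dsF_asymptotics :
    ∀ ε : ℝ, 0 < ε →
      Tendsto (fun x : ℝ => dsF x / x ^ ((1 : ℝ) + ε)) (𝓝[>] (0 : ℝ)) atTop ∧
      Tendsto (fun x : ℝ => dsF x * (-Real.log x) ^ ε / x) (𝓝[>] (0 : ℝ)) (𝓝 0) := by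
  intro ε hε
  have hneglog : Tendsto (fun x => -log x) (𝓝[>] 0) atTop :=
    tendsto_neg_atBot_atTop.comp tendsto_log_nhdsGT_zero
  have hunit : ∀ᶠ x in 𝓝[>] (0 : ℝ), 0 < x ∧ x < 1 :=
    Ioo_mem_nhdsGT_of_mem ⟨le_rfl, one_pos⟩
  constructor
  · refine (tendsto_exp_atTop.comp
      ((tendsto_mul_sub_div_two_log_atTop hε).comp hneglog)).congr' ?_
    filter_upwards [hunit] with x ⟨h0, h1⟩
    exact (dsF_div_rpow_eq h0 h1 ε).symm
  · refine (tendsto_exp_atBot.comp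
      ((tendsto_mul_log_sub_div_two_log_atBot ε).comp hneglog)).congr' ?_
    filter_upwards [hunit] with x ⟨h0, h1⟩
    exact (dsF_mul_rpow_neg_log_div_eq h0 h1 ε).symm
end
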